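/- Let p1 and p2 be probability transition densities on ℝ satisfying, for constants 0 < C1 ≤ C2 and variances 0 < v' ≤ V': C1 G(m1, v', y) ≤ p1(y) and p2(y) ≤ C2 G(m2, V', y) for all y, where G is the Gaussian density (so V' is the variance in the upper bound of p2 and v' the variance in the lower bound of p1). Suppose q0 > 1 satisfies q0 · (1/V') + (1 − q0) · (1/v') > 0. Then ∫ p2(y)^{q0} p1(y)^{1−q0} dy ≤ C2^{q0} C1^{1−q0} ∫ G(m2, V', y)^{q0} G(m1, v', y)^{1−q0} dy < ∞, and the right-hand side is bounded by an explicit constant times exp(c (m1 − m2)²/2) with c = (q0(q0−1)/(V' v')) / (q0/V' + (1−q0)/v') > 0. -/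
import Mathlib


open MeasureTheory Real

/-- Gaussian density with mean `m` and variance `v`. -/
noncomputable def gaussDensity (m v y : ℝ) : ℝ :=
  (2 * π * v) ^ (-(1 : ℝ)/2) * Real.exp (-(y - m)^2 / (2 * v))

lemma gaussDensity_pos {m v : ℝ} (hv : 0 < v) (y : ℝ) : 0 < gaussDensity m v y := by
  have h2 : (0:ℝ) < 2 * π * v := by positivity
  unfold gaussDensity
  positivity

lemma quad_complete_square (α β y m2 m1 : ℝ) (h : α + β ≠ 0) :
    α * (y - m2)^2 + β * (y - m1)^2
      = (α + β) * (y - (α * m2 + β * m1) / (α + β))^2 + (α * β / (α + β)) * (m1 - m2)^2 := by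
  field_simp
  ring

lemma gaussDensity_rpow {m v : ℝ} (hv : 0 < v) (q y : ℝ) :
    gaussDensity m v y ^ q = (2 * π * v) ^ (-(q/2)) * Real.exp (-(y - m)^2 / (2 * v) * q) := by
  have h2 : (0:ℝ) < 2 * π * v := by positivity
  unfold gaussDensity
  rw [Real.mul_rpow (Real.rpow_nonneg h2.le _) (Real.exp_pos _).le,
    ← Real.rpow_mul h2.le, ← Real.exp_mul]
  ring_nf

/-- Rényi-type bound for densities sandwiched by Gaussian densities:
if `p1 ≥ C1 G(m1, v', ·)` and `p2 ≤ C2 G(m2, V', ·)` and `q0 > 1` satisfies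
`q0/V' + (1-q0)/v' > 0`, then `∫ p2^{q0} p1^{1-q0}` is finite, bounded by
`C2^{q0} C1^{1-q0} ∫ G(m2,V')^{q0} G(m1,v')^{1-q0}`, which is in turn bounded by
an explicit constant times `exp(c (m1-m2)²/2)` with `c > 0`. -/
theorem stmt_17 (p1 p2 : ℝ → ℝ) (hp1m : Measurable p1) (hp2m : Measurable p2)
    (hp2nonneg : ∀ y, 0 ≤ p2 y)
    (C1 C2 m1 m2 v' V' q0 : ℝ)
    (hC1 : 0 < C1) (hC12 : C1 ≤ C2) (hv' : 0 < v') (hvV : v' ≤ V')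
    (hlow : ∀ y, C1 * gaussDensity m1 v' y ≤ p1 y)
    (hup : ∀ y, p2 y ≤ C2 * gaussDensity m2 V' y)
    (hq0 : 1 < q0) (hpos : 0 < q0 / V' + (1 - q0) / v') :
    Integrable (fun y => p2 y ^ q0 * p1 y ^ (1 - q0))
    ∧ Integrable (fun y => gaussDensity m2 V' y ^ q0 * gaussDensity m1 v' y ^ (1 - q0))
    ∧ (∫ y, p2 y ^ q0 * p1 y ^ (1 - q0))
        ≤ C2 ^ q0 * C1 ^ (1 - q0)
          * ∫ y, gaussDensity m2 V' y ^ q0 * gaussDensity m1 v' y ^ (1 - q0)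
    ∧ (∫ y, gaussDensity m2 V' y ^ q0 * gaussDensity m1 v' y ^ (1 - q0))
        ≤ (Real.sqrt (2 * π / (q0 / V' + (1 - q0) / v'))
            / ((2 * π * V') ^ (q0 / 2) * (2 * π * v') ^ ((1 - q0) / 2)))
          * Real.exp ((q0 * (q0 - 1) / (V' * v')) / (q0 / V' + (1 - q0) / v')
              * (m1 - m2)^2 / 2)
    ∧ 0 < (q0 * (q0 - 1) / (V' * v')) / (q0 / V' + (1 - q0) / v') := by
  have hV' : 0 < V' := lt_of_lt_of_le hv' hvV
  set a : ℝ := q0 / V' + (1 - q0) / v' with ha_def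
  have ha : 0 < a := hpos
  set bb : ℝ := ((q0 / V') * m2 + ((1 - q0) / v') * m1) / a with hbb_def
  set E : ℝ := (q0 * (q0 - 1) / (V' * v')) / a * (m1 - m2)^2 / 2 with hE_def
  set K : ℝ := (2 * π * V') ^ (-(q0/2)) * (2 * π * v') ^ (-((1 - q0)/2)) with hK_def
  clear_value a bb E K
  have hP : (0:ℝ) < 2 * π * V' := by positivity
  have hp : (0:ℝ) < 2 * π * v' := by positivity
  -- pointwise identity for the product of Gaussian powers
  have hfun : ∀ y, gaussDensity m2 V' y ^ q0 * gaussDensity m1 v' y ^ (1 - q0)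
      = K * Real.exp E * Real.exp (-(a/2) * (y - bb)^2) := by
    intro y
    have hV0 : V' ≠ 0 := hV'.ne'
    have hv0 : v' ≠ 0 := hv'.ne'
    have ha0 : a ≠ 0 := ha.ne'
    have key : -(y - m2)^2 / (2 * V') * q0 + -(y - m1)^2 / (2 * v') * (1 - q0)
        = E + (-(a/2) * (y - bb)^2) := by
      have h1 : -(y - m2)^2 / (2 * V') * q0 + -(y - m1)^2 / (2 * v') * (1 - q0)
          = -(1/2) * ((q0 / V') * (y - m2)^2 + ((1 - q0) / v') * (y - m1)^2) := by
        ring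
      have h2 := quad_complete_square (q0 / V') ((1 - q0) / v') y m2 m1 (by rw [← ha_def]; exact ha0)
      rw [← ha_def] at h2
      rw [h1, h2, hE_def]
      have h3 : (q0 / V') * ((1 - q0) / v') = -(q0 * (q0 - 1) / (V' * v')) := by
        field_simp; ring
      rw [h3, hbb_def]
      ring
    rw [gaussDensity_rpow hV', gaussDensity_rpow hv', mul_mul_mul_comm, ← Real.exp_add, key,
      Real.exp_add, hK_def]
    ring
  have haesm : AEStronglyMeasurable
      (fun y => gaussDensity m2 V' y ^ q0 * gaussDensity m1 v' y ^ (1 - q0)) volume := by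
    have : Measurable (fun y => gaussDensity m2 V' y ^ q0 * gaussDensity m1 v' y ^ (1 - q0)) := by
      unfold gaussDensity; fun_prop
    exact this.aestronglyMeasurable
  have hgint : Integrable
      (fun y => gaussDensity m2 V' y ^ q0 * gaussDensity m1 v' y ^ (1 - q0)) := by
    have h1 : Integrable (fun x : ℝ => Real.exp (-(a/2) * x^2)) :=
      integrable_exp_neg_mul_sq (by positivity)
    have h2 : Integrable (fun y : ℝ => Real.exp (-(a/2) * (y - bb)^2)) :=
      h1.comp_sub_right bb
    have := h2.const_mul (K * Real.exp E)
    exact this.congr (Filter.Eventually.of_forall fun y => (hfun y).symm)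
  -- exact value of the Gaussian integral
  have hval : (∫ y, gaussDensity m2 V' y ^ q0 * gaussDensity m1 v' y ^ (1 - q0))
      = K * Real.exp E * Real.sqrt (2 * π / a) := by
    simp_rw [hfun]
    rw [integral_const_mul]
    rw [show (fun y : ℝ => Real.exp (-(a/2) * (y - bb)^2))
        = (fun y : ℝ => (fun x : ℝ => Real.exp (-(a/2) * x^2)) (y - bb)) from rfl]
    rw [integral_sub_right_eq_self (fun x : ℝ => Real.exp (-(a/2) * x^2)) bb]
    rw [integral_gaussian]
    congr 2
    rw [div_div_eq_mul_div]
    ring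
  -- pointwise domination
  have hpt : ∀ y, p2 y ^ q0 * p1 y ^ (1 - q0)
      ≤ C2 ^ q0 * C1 ^ (1 - q0) * (gaussDensity m2 V' y ^ q0 * gaussDensity m1 v' y ^ (1 - q0)) := by
    intro y
    have hg1 : 0 < gaussDensity m1 v' y := gaussDensity_pos hv' y
    have hg2 : 0 < gaussDensity m2 V' y := gaussDensity_pos hV' y
    have hp1pos : 0 < p1 y := lt_of_lt_of_le (mul_pos hC1 hg1) (hlow y)
    have h1 : p2 y ^ q0 ≤ (C2 * gaussDensity m2 V' y) ^ q0 :=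
      Real.rpow_le_rpow (hp2nonneg y) (hup y) (by linarith)
    have h2 : p1 y ^ (1 - q0) ≤ (C1 * gaussDensity m1 v' y) ^ (1 - q0) :=
      Real.rpow_le_rpow_of_nonpos (by positivity) (hlow y) (by linarith)
    have hC2 : (0:ℝ) < C2 := lt_of_lt_of_le hC1 hC12
    calc p2 y ^ q0 * p1 y ^ (1 - q0)
        ≤ (C2 * gaussDensity m2 V' y) ^ q0 * (C1 * gaussDensity m1 v' y) ^ (1 - q0) := by
          apply mul_le_mul h1 h2 (Real.rpow_nonneg hp1pos.le _)
            (Real.rpow_nonneg (by positivity) _)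
      _ = C2 ^ q0 * C1 ^ (1 - q0)
            * (gaussDensity m2 V' y ^ q0 * gaussDensity m1 v' y ^ (1 - q0)) := by
          rw [Real.mul_rpow hC2.le hg2.le, Real.mul_rpow hC1.le hg1.le]; ring
  have hfnonneg : ∀ y, 0 ≤ p2 y ^ q0 * p1 y ^ (1 - q0) := by
    intro y
    have hp1pos : 0 < p1 y :=
      lt_of_lt_of_le (mul_pos hC1 (gaussDensity_pos hv' y)) (hlow y)
    exact mul_nonneg (Real.rpow_nonneg (hp2nonneg y) _) (Real.rpow_nonneg hp1pos.le _)
  have hfmeas : AEStronglyMeasurable (fun y => p2 y ^ q0 * p1 y ^ (1 - q0)) volume := by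
    have : Measurable (fun y => p2 y ^ q0 * p1 y ^ (1 - q0)) := by fun_prop
    exact this.aestronglyMeasurable
  have hbint : Integrable (fun y => C2 ^ q0 * C1 ^ (1 - q0)
      * (gaussDensity m2 V' y ^ q0 * gaussDensity m1 v' y ^ (1 - q0))) :=
    hgint.const_mul _
  have hfint : Integrable (fun y => p2 y ^ q0 * p1 y ^ (1 - q0)) := by
    refine hbint.mono' hfmeas (Filter.Eventually.of_forall fun y => ?_)
    rw [Real.norm_of_nonneg (hfnonneg y)]
    exact hpt y
  refine ⟨hfint, hgint, ?_, ?_, ?_⟩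
  · calc (∫ y, p2 y ^ q0 * p1 y ^ (1 - q0))
        ≤ ∫ y, C2 ^ q0 * C1 ^ (1 - q0)
            * (gaussDensity m2 V' y ^ q0 * gaussDensity m1 v' y ^ (1 - q0)) :=
          integral_mono hfint hbint hpt
      _ = C2 ^ q0 * C1 ^ (1 - q0)
            * ∫ y, gaussDensity m2 V' y ^ q0 * gaussDensity m1 v' y ^ (1 - q0) :=
          integral_const_mul _ _
  · rw [hval]
    apply le_of_eq
    rw [hK_def, Real.rpow_neg hP.le, Real.rpow_neg hp.le]
    ring
  · apply div_pos _ ha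
    apply div_pos (by nlinarith) (by positivity)
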